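/- arXiv:1904.08334 — 5 statements merged into one kernel-verified Lean document; each statement's English description precedes it below -/
import Mathlib

section
/- The one-step Fourier amplification factor C satisfies the exact identity E[|C|²]·(1 − (a_x+a_y)k)² = 1 + 2d·√(ρ_x ρ_y)·ρ_xy·k + k·(c_x²ρ_x + c_y²ρ_y + 2c_x c_y·√(ρ_x ρ_y)·ρ_xy) + k²·(2b_x²ρ_x² + 2b_y²ρ_y² + d²ρ_x ρ_y(1 + 2ρ_xy²) + 4b_x b_y ρ_x ρ_y ρ_xy² + 4(b_x ρ_x + b_y ρ_y)·d·√(ρ_x ρ_y)·ρ_xy). -/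
/-!
Clearing the denominator, `‖C‖² (1 - (a_x + a_y) k)²` is the squared modulus of the numerator.
After substituting `Z̃ = ρ_xy Z + √(1 - ρ_xy²) Z'`, its real part is a constant plus a quadratic
form in the independent standard normals `Z, Z'` and its imaginary part is a linear form in them,
so the expectation only involves `E Z² = 1`, `E Z⁴ = 3` and the vanishing odd moments. The fourth
moment comes from Gaussian integration by parts, `E X^(n+2) = (n+1) v E X^n` for `X ~ N(0, v)`.
-/

open MeasureTheory ProbabilityTheory Real
open scoped NNReal

section GaussianMoments

variable {μ : ℝ} {v : ℝ≥0}

lemma hasDerivAt_gaussianPDFReal (x : ℝ) :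
    HasDerivAt (gaussianPDFReal μ v) (-(x - μ) / v * gaussianPDFReal μ v x) x := by
  have h : HasDerivAt (fun y : ℝ => -(y - μ) ^ 2 / (2 * v)) (-(x - μ) / v) x :=
    ((((hasDerivAt_id' x).sub_const μ).fun_pow 2).fun_neg.div_const _).congr_deriv (by
      field_simp; ring)
  rw [gaussianPDFReal_def]
  exact (h.exp.const_mul _).congr_deriv (by ring)

lemma MeasureTheory.Integrable.gaussianPDFReal_mul {f : ℝ → ℝ} (hv : v ≠ 0)
    (hf : Integrable f (gaussianReal μ v)) :
    Integrable (fun x => gaussianPDFReal μ v x * f x) := by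
  rw [gaussianReal_of_var_ne_zero μ hv,
    integrable_withDensity_iff_integrable_smul' (by fun_prop) (by simp [gaussianPDF])] at hf
  simpa [gaussianPDF, ENNReal.toReal_ofReal (gaussianPDFReal_nonneg μ v _)] using hf

lemma integrable_pow_gaussianReal (n : ℕ) : Integrable (fun x : ℝ => x ^ n) (gaussianReal μ v) :=
  (integrable_norm_iff (by fun_prop)).1 <| by
    simpa [norm_pow] using (memLp_id_gaussianReal (μ := μ) (v := v) n).integrable_norm_pow'

lemma integral_pow_add_two_gaussianReal (hv : v ≠ 0) (n : ℕ) :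
    ∫ x, x ^ (n + 2) ∂gaussianReal 0 v = (n + 1) * v * ∫ x, x ^ n ∂gaussianReal 0 v := by
  have hint (m : ℕ) : Integrable (fun x => gaussianPDFReal 0 v x * x ^ m) :=
    (integrable_pow_gaussianReal m).gaussianPDFReal_mul hv
  simp only [integral_gaussianReal_eq_integral_smul hv, smul_eq_mul]
  rw [← integral_const_mul, ← sub_eq_zero, ← integral_sub (hint _) ((hint n).const_mul _)]
  have hv' : (v : ℝ) ≠ 0 := by exact_mod_cast hv
  -- `φ' = -x φ / v` makes `x ^ (n + 2) φ - (n + 1) v x ^ n φ` the derivative of `-v x ^ (n + 1) φ`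
  refine integral_eq_zero_of_hasDerivAt_of_integrable
    (f := fun x => -(v * (gaussianPDFReal 0 v x * x ^ (n + 1)))) (fun x => ?_)
    ((hint _).sub ((hint n).const_mul _)) ((hint (n + 1)).const_mul _).fun_neg
  refine (((hasDerivAt_gaussianPDFReal x).mul (hasDerivAt_pow (n + 1) x)).const_mul _).neg
    |>.congr_deriv ?_
  field_simp
  push_cast
  ring

lemma integral_pow_two_gaussianReal_zero_one : ∫ x, x ^ 2 ∂gaussianReal 0 1 = 1 := by
  simpa using integral_pow_add_two_gaussianReal one_ne_zero 0

lemma integral_pow_four_gaussianReal_zero_one : ∫ x, x ^ 4 ∂gaussianReal 0 1 = 3 := by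
  rw [integral_pow_add_two_gaussianReal one_ne_zero 2, integral_pow_two_gaussianReal_zero_one]
  norm_num

end GaussianMoments

lemma ProbabilityTheory.HasLaw.integrable_comp {Ω 𝓧 : Type*} [MeasurableSpace Ω]
    [MeasurableSpace 𝓧] {P : Measure Ω} {μ : Measure 𝓧} {X : Ω → 𝓧} {f : 𝓧 → ℝ}
    (hX : HasLaw X μ P) (hf : Integrable f μ) : Integrable (f ∘ X) P := by
  rw [← hX.map_eq] at hf
  exact (integrable_map_measure hf.1 hX.aemeasurable).1 hf

lemma ProbabilityTheory.hasLaw_of_map_eq {Ω 𝓧 : Type*} [MeasurableSpace Ω] [MeasurableSpace 𝓧]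
    {P : Measure Ω} {μ : Measure 𝓧} [NeZero μ] {X : Ω → 𝓧} (h : P.map X = μ) : HasLaw X μ P :=
  ⟨aemeasurable_of_map_neZero (h ▸ inferInstance), h⟩

lemma integral_sq_add_sq_of_indepFun_gaussianReal {Ω : Type*} [MeasurableSpace Ω]
    {P : Measure Ω} {X Y : Ω → ℝ} (hX : HasLaw X (gaussianReal 0 1) P)
    (hY : HasLaw Y (gaussianReal 0 1) P) (hXY : IndepFun X Y P) (a b c d e f : ℝ) :
    ∫ ω, ((a + b * X ω ^ 2 + c * (X ω * Y ω) + d * Y ω ^ 2) ^ 2 + (e * X ω + f * Y ω) ^ 2) ∂P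
      = (a + b + d) ^ 2 + 2 * b ^ 2 + c ^ 2 + 2 * d ^ 2 + e ^ 2 + f ^ 2 := by
  have hint (i j : ℕ) : Integrable (fun ω => X ω ^ i * Y ω ^ j) P :=
    (hXY.comp (measurable_id.pow_const i) (measurable_id.pow_const j)).integrable_mul
      (hX.integrable_comp (integrable_pow_gaussianReal i))
      (hY.integrable_comp (integrable_pow_gaussianReal j))
  have hmoment (i j : ℕ) : ∫ ω, X ω ^ i * Y ω ^ j ∂P
      = (∫ x, x ^ i ∂gaussianReal 0 1) * ∫ y, y ^ j ∂gaussianReal 0 1 := by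
    rw [hXY.integral_fun_comp_mul_comp (f := fun x => x ^ i) (g := fun y => y ^ j)
      hX.aemeasurable hY.aemeasurable (by fun_prop) (by fun_prop),
      ← hX.integral_comp (by fun_prop), ← hY.integral_comp (by fun_prop)]
    rfl
  calc _ = ∫ ω, (a ^ 2 * (X ω ^ 0 * Y ω ^ 0) + (2 * a * b + e ^ 2) * (X ω ^ 2 * Y ω ^ 0)
        + (2 * a * c + 2 * e * f) * (X ω ^ 1 * Y ω ^ 1) + (2 * a * d + f ^ 2) * (X ω ^ 0 * Y ω ^ 2)
        + b ^ 2 * (X ω ^ 4 * Y ω ^ 0) + 2 * b * c * (X ω ^ 3 * Y ω ^ 1)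
        + (c ^ 2 + 2 * b * d) * (X ω ^ 2 * Y ω ^ 2) + 2 * c * d * (X ω ^ 1 * Y ω ^ 3)
        + d ^ 2 * (X ω ^ 0 * Y ω ^ 4)) ∂P := by congr 1; ext ω; ring
    _ = _ := by
      simp (disch := fun_prop) only [integral_add, integral_const_mul, hmoment]
      simp [integral_pow_two_gaussianReal_zero_one, integral_pow_four_gaussianReal_zero_one]
      ring

lemma Real.sqrt_mul_mul_sqrt_mul {a b k : ℝ} (ha : 0 ≤ a) (hk : 0 ≤ k) :
    √(a * k) * √(b * k) = √(a * b) * k := by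
  rw [← Real.sqrt_mul (mul_nonneg ha hk), show a * k * (b * k) = a * b * k ^ 2 by ring,
    Real.sqrt_mul' _ (sq_nonneg k), Real.sqrt_sq hk]

lemma Complex.norm_div_ofReal_sq_mul_sq (z : ℂ) {D : ℝ} (hD : D ≠ 0) :
    ‖z / D‖ ^ 2 * D ^ 2 = z.re ^ 2 + z.im ^ 2 := by
  rw [norm_div, Complex.norm_real, div_pow, Real.norm_eq_abs, sq_abs,
    div_mul_cancel₀ _ (pow_ne_zero 2 hD), Complex.sq_norm, Complex.normSq_apply]
  ring

theorem second_moment_one_step_amplification_factor_general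
    {Ω : Type*} [MeasureSpace Ω]
    (ρx ρy ρxy hx hy ξ η k : ℝ)
    (hρx0 : 0 ≤ ρx) (hρy0 : 0 ≤ ρy)
    (hρxy : |ρxy| ≤ 1) (hk : 0 < k)
    (ax bx cx ay byy cy dd : ℝ)
    (hax : ax = -(2 * (Real.sin (ξ * hx / 2)) ^ 2) / hx ^ 2)
    (hay : ay = -(2 * (Real.sin (η * hy / 2)) ^ 2) / hy ^ 2)
    (Z Z' : Ω → ℝ)
    (hindep : IndepFun Z Z' ℙ)
    (hZ : Measure.map Z ℙ = gaussianReal 0 1)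
    (hZ' : Measure.map Z' ℙ = gaussianReal 0 1)
    (Zt : Ω → ℝ)
    (hZt : ∀ ω, Zt ω = ρxy * Z ω + Real.sqrt (1 - ρxy ^ 2) * Z' ω)
    (C : Ω → ℂ)
    (hC : ∀ ω, C ω =
      (1 - Complex.I * (cx * Real.sqrt (ρx * k) * Z ω : ℝ)
         - Complex.I * (cy * Real.sqrt (ρy * k) * Zt ω : ℝ)
         + (bx * ρx * k * ((Z ω) ^ 2 - 1) : ℝ)
         + (byy * ρy * k * ((Zt ω) ^ 2 - 1) : ℝ)
         + (dd * Real.sqrt (ρx * ρy) * k * (Z ω * Zt ω) : ℝ))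
      / ((1 - (ax + ay) * k : ℝ))) :
    (∫ ω, ‖C ω‖ ^ 2 ∂ℙ) * (1 - (ax + ay) * k) ^ 2 =
      1 + 2 * dd * Real.sqrt (ρx * ρy) * ρxy * k
        + k * (cx ^ 2 * ρx + cy ^ 2 * ρy + 2 * cx * cy * Real.sqrt (ρx * ρy) * ρxy)
        + k ^ 2 * (2 * bx ^ 2 * ρx ^ 2 + 2 * byy ^ 2 * ρy ^ 2
            + dd ^ 2 * ρx * ρy * (1 + 2 * ρxy ^ 2)
            + 4 * bx * byy * ρx * ρy * ρxy ^ 2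
            + 4 * (bx * ρx + byy * ρy) * dd * Real.sqrt (ρx * ρy) * ρxy) := by
  have hax0 : ax ≤ 0 := by rw [hax, neg_div]; exact neg_nonpos.2 (by positivity)
  have hay0 : ay ≤ 0 := by rw [hay, neg_div]; exact neg_nonpos.2 (by positivity)
  have hD : 0 < 1 - (ax + ay) * k := by nlinarith
  set s := √(1 - ρxy ^ 2)
  set p := bx * ρx * k
  set q := byy * ρy * k
  set r := dd * √(ρx * ρy) * k
  set u := cx * √(ρx * k)
  set w := cy * √(ρy * k)
  have hpoint : ∀ ω, ‖C ω‖ ^ 2 * (1 - (ax + ay) * k) ^ 2 =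
      (1 - p - q + (p + q * ρxy ^ 2 + r * ρxy) * Z ω ^ 2 + (2 * q * ρxy + r) * s * (Z ω * Z' ω)
        + q * s ^ 2 * Z' ω ^ 2) ^ 2 + ((u + w * ρxy) * Z ω + w * s * Z' ω) ^ 2 := by
    intro ω
    rw [hC ω, Complex.norm_div_ofReal_sq_mul_sq _ hD.ne']
    simp only [Complex.add_re, Complex.add_im, Complex.sub_re, Complex.sub_im,
      Complex.mul_re, Complex.mul_im, Complex.I_re, Complex.I_im,
      Complex.ofReal_re, Complex.ofReal_im, Complex.one_re, Complex.one_im, hZt ω]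
    ring
  rw [← integral_mul_const, integral_congr_ae (Filter.Eventually.of_forall hpoint),
    integral_sq_add_sq_of_indepFun_gaussianReal (hasLaw_of_map_eq hZ) (hasLaw_of_map_eq hZ')
      hindep]
  have hs : s ^ 2 = 1 - ρxy ^ 2 := Real.sq_sqrt (sub_nonneg.2 ((sq_le_one_iff_abs_le_one _).2 hρxy))
  have hSx : √(ρx * k) ^ 2 = ρx * k := Real.sq_sqrt (by positivity)
  have hSy : √(ρy * k) ^ 2 = ρy * k := Real.sq_sqrt (by positivity)
  have hSxy : √(ρx * ρy) ^ 2 = ρx * ρy := Real.sq_sqrt (by positivity)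
  linear_combination
    (q * (2 + 2 * r * ρxy + q * (s ^ 2 - 1 + ρxy ^ 2)) + (2 * q * ρxy + r) ^ 2
      + 2 * q ^ 2 * (s ^ 2 + 1 - ρxy ^ 2) + w ^ 2) * hs
    + cx ^ 2 * hSx + cy ^ 2 * hSy
    + 2 * cx * cy * ρxy * Real.sqrt_mul_mul_sqrt_mul (b := ρy) hρx0 hk.le
    + dd ^ 2 * k ^ 2 * (1 + 2 * ρxy ^ 2) * hSxy

theorem second_moment_one_step_amplification_factor
    {Ω : Type*} [MeasureSpace Ω] [IsProbabilityMeasure (ℙ : Measure Ω)]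
    (ρx ρy ρxy hx hy ξ η k : ℝ)
    (hρx0 : 0 ≤ ρx) (hρx1 : ρx < 1) (hρy0 : 0 ≤ ρy) (hρy1 : ρy < 1)
    (hρxy : |ρxy| ≤ 1) (hhx : 0 < hx) (hhy : 0 < hy) (hk : 0 < k)
    (ax bx cx ay byy cy dd : ℝ)
    (hax : ax = -(2 * (Real.sin (ξ * hx / 2)) ^ 2) / hx ^ 2)
    (hbx : bx = -((Real.sin (ξ * hx)) ^ 2) / (2 * hx ^ 2))
    (hcx : cx = Real.sin (ξ * hx) / hx)
    (hay : ay = -(2 * (Real.sin (η * hy / 2)) ^ 2) / hy ^ 2)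
    (hby : byy = -((Real.sin (η * hy)) ^ 2) / (2 * hy ^ 2))
    (hcy : cy = Real.sin (η * hy) / hy)
    (hd : dd = -(Real.sin (ξ * hx) * Real.sin (η * hy)) / (hx * hy))
    (Z Z' : Ω → ℝ) (hZm : Measurable Z) (hZ'm : Measurable Z')
    (hindep : IndepFun Z Z' ℙ)
    (hZ : Measure.map Z ℙ = gaussianReal 0 1)
    (hZ' : Measure.map Z' ℙ = gaussianReal 0 1)
    (Zt : Ω → ℝ)
    (hZt : ∀ ω, Zt ω = ρxy * Z ω + Real.sqrt (1 - ρxy ^ 2) * Z' ω)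
    (C : Ω → ℂ)
    (hC : ∀ ω, C ω =
      (1 - Complex.I * (cx * Real.sqrt (ρx * k) * Z ω : ℝ)
         - Complex.I * (cy * Real.sqrt (ρy * k) * Zt ω : ℝ)
         + (bx * ρx * k * ((Z ω) ^ 2 - 1) : ℝ)
         + (byy * ρy * k * ((Zt ω) ^ 2 - 1) : ℝ)
         + (dd * Real.sqrt (ρx * ρy) * k * (Z ω * Zt ω) : ℝ))
      / ((1 - (ax + ay) * k : ℝ))) :
    (∫ ω, ‖C ω‖ ^ 2 ∂ℙ) * (1 - (ax + ay) * k) ^ 2 =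
      1 + 2 * dd * Real.sqrt (ρx * ρy) * ρxy * k
        + k * (cx ^ 2 * ρx + cy ^ 2 * ρy + 2 * cx * cy * Real.sqrt (ρx * ρy) * ρxy)
        + k ^ 2 * (2 * bx ^ 2 * ρx ^ 2 + 2 * byy ^ 2 * ρy ^ 2
            + dd ^ 2 * ρx * ρy * (1 + 2 * ρxy ^ 2)
            + 4 * bx * byy * ρx * ρy * ρxy ^ 2
            + 4 * (bx * ρx + byy * ρy) * dd * Real.sqrt (ρx * ρy) * ρxy) :=
  second_moment_one_step_amplification_factor_general ρx ρy ρxy hx hy ξ η k hρx0 hρy0 hρxy hk ax bx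
    cx ay byy cy dd hax hay Z Z' hindep hZ hZ' Zt hZt C hC
end

section
/- (Middle wave region estimate for the exact Fourier-mode solution.) Fix T > 0 and p ∈ (0,1/2). For every r > 0 there exists C > 0 such that for all h_x, h_y ∈ (0,1) and all integers N ≥ 1: E[ | ∬_{Ω_mid¹} X(T,ξ,η) dξ dη |² ] ≤ C·h_y^r, where Ω_mid¹ = {(ξ,η) ∈ ℝ² : |ξ| ≤ h_x^{−p} and h_y^{−p} ≤ |η| ≤ π/h_y}. -/
/-!
The modulus of `X(T, ξ, η)` is the deterministic Gaussian `exp (-a ξ²) exp (-b η²)` with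
`a = (1 - ρ_x) T / 2` and `b = (1 - ρ_y) T / 2`: the noise enters only through a phase. Hence the
expectation is bounded by the square of the integral of this Gaussian over `|η| ≥ h_y^{-p}`.
Splitting `exp (-b η²) ≤ exp (-b h_y^{-2p} / 2) exp (-b η² / 2)` there leaves a factor
`exp (-b h_y^{-2p})`, which decays faster than any power of `h_y`.
-/

open MeasureTheory ProbabilityTheory Real

lemma exp_neg_mul_rpow_neg_le {b q : ℝ} (hb : 0 < b) (hq : 0 < q) (r : ℝ) :
    ∃ C > 0, ∀ y : ℝ, 0 < y → y < 1 → rexp (-(b * y ^ (-q))) ≤ C * y ^ r := by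
  set m : ℕ := ⌈r / q⌉₊
  refine ⟨m.factorial / b ^ m, by positivity, fun y hy0 hy1 => ?_⟩
  have hpos : 0 < b * y ^ (-q) := by positivity
  have hqm : r ≤ q * m := by
    rw [← div_le_iff₀' hq]
    exact Nat.le_ceil _
  calc rexp (-(b * y ^ (-q)))
      ≤ m.factorial / (b * y ^ (-q)) ^ m := by
        rw [exp_neg, ← inv_div]
        exact inv_anti₀ (by positivity) (Real.pow_div_factorial_le_exp _ hpos.le m)
    _ = m.factorial / b ^ m * y ^ (q * m) := by
        rw [mul_pow, ← rpow_mul_natCast hy0.le, neg_mul, rpow_neg hy0.le]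
        field_simp
    _ ≤ m.factorial / b ^ m * y ^ r :=
        mul_le_mul_of_nonneg_left (rpow_le_rpow_of_exponent_ge hy0 hy1.le hqm)
          (by positivity)

lemma norm_exp_neg_sub_I_mul_sub_I_mul (A B s t : ℝ) :
    ‖Complex.exp (-(A : ℂ) - B - Complex.I * s - Complex.I * t)‖ = rexp (-A) * rexp (-B) := by
  rw [Complex.norm_exp, ← exp_add]
  simp [sub_eq_add_neg]

lemma setIntegral_abs_ge_exp_neg_mul_sq_le {b : ℝ} (hb : 0 < b) {L : ℝ} (hL : 0 ≤ L) :
    ∫ η in {η : ℝ | L ≤ |η|}, rexp (-b * η ^ 2) ≤ rexp (-(b * L ^ 2) / 2) * √(π / (b / 2)) := by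
  have hhalf : Integrable fun η : ℝ => rexp (-(b / 2) * η ^ 2) :=
    integrable_exp_neg_mul_sq (by positivity)
  calc ∫ η in {η : ℝ | L ≤ |η|}, rexp (-b * η ^ 2)
      ≤ ∫ η in {η : ℝ | L ≤ |η|}, rexp (-(b * L ^ 2) / 2) * rexp (-(b / 2) * η ^ 2) := by
        refine setIntegral_mono_on (integrable_exp_neg_mul_sq hb).integrableOn
          (hhalf.const_mul _).integrableOn (measurableSet_le measurable_const measurable_abs)
          fun η hη => ?_
        have hsq : L ^ 2 ≤ η ^ 2 := by simpa using pow_le_pow_left₀ hL hη 2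
        rw [← exp_add, exp_le_exp]
        nlinarith
    _ ≤ rexp (-(b * L ^ 2) / 2) * ∫ η, rexp (-(b / 2) * η ^ 2) := by
        rw [integral_const_mul]
        exact mul_le_mul_of_nonneg_left
          (setIntegral_le_integral hhalf (.of_forall fun _ => (exp_pos _).le)) (exp_pos _).le
    _ = rexp (-(b * L ^ 2) / 2) * √(π / (b / 2)) := by rw [integral_gaussian]

lemma sq_norm_setIntegral_le_of_norm_le_gaussian {E : Type*} [NormedAddCommGroup E]
    [NormedSpace ℝ E] {a b L : ℝ} (ha : 0 < a) (hb : 0 < b) (hL : 0 ≤ L)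
    {S : Set (ℝ × ℝ)} (hS : ∀ q ∈ S, L ≤ |q.2|) {F : ℝ × ℝ → E}
    (hF : ∀ q, ‖F q‖ ≤ rexp (-a * q.1 ^ 2) * rexp (-b * q.2 ^ 2)) :
    ‖∫ q in S, F q‖ ^ 2 ≤ π / a * (π / (b / 2)) * rexp (-(b * L ^ 2)) := by
  set g : ℝ × ℝ → ℝ := fun q => rexp (-a * q.1 ^ 2) * rexp (-b * q.2 ^ 2)
  have hg : Integrable g := by
    rw [Measure.volume_eq_prod]
    exact (integrable_exp_neg_mul_sq ha).mul_prod (integrable_exp_neg_mul_sq hb)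
  have hStail : S ⊆ Set.univ ×ˢ {η : ℝ | L ≤ |η|} := fun q hq => ⟨trivial, hS q hq⟩
  have hnorm : ‖∫ q in S, F q‖ ≤ √(π / a) * (rexp (-(b * L ^ 2) / 2) * √(π / (b / 2))) :=
    calc ‖∫ q in S, F q‖
        ≤ ∫ q in S, g q := norm_integral_le_of_norm_le hg.integrableOn (.of_forall hF)
      _ ≤ ∫ q in Set.univ ×ˢ {η : ℝ | L ≤ |η|}, g q :=
          setIntegral_mono_set hg.integrableOn (.of_forall fun _ => by positivity)
            (LE.le.eventuallyLE hStail)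
      _ = (∫ ξ, rexp (-a * ξ ^ 2)) * ∫ η in {η : ℝ | L ≤ |η|}, rexp (-b * η ^ 2) := by
          rw [Measure.volume_eq_prod, setIntegral_prod_mul (fun ξ => rexp (-a * ξ ^ 2))
            (fun η => rexp (-b * η ^ 2)), setIntegral_univ]
      _ ≤ √(π / a) * (rexp (-(b * L ^ 2) / 2) * √(π / (b / 2))) := by
          rw [integral_gaussian]
          exact mul_le_mul_of_nonneg_left (setIntegral_abs_ge_exp_neg_mul_sq_le hb hL)
            (sqrt_nonneg _)
  calc ‖∫ q in S, F q‖ ^ 2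
      ≤ (√(π / a) * (rexp (-(b * L ^ 2) / 2) * √(π / (b / 2)))) ^ 2 :=
        pow_le_pow_left₀ (norm_nonneg _) hnorm 2
    _ = π / a * (π / (b / 2)) * rexp (-(b * L ^ 2)) := by
        rw [mul_pow, mul_pow, sq_sqrt (by positivity), sq_sqrt (by positivity), ← exp_nat_mul]
        push_cast
        ring_nf

theorem middle_wave_region_estimate_exact_general
    (ρx ρy ρxy T p : ℝ)
    (hρx1 : ρx < 1) (hρy1 : ρy < 1)
    (hT : 0 < T) (hp0 : 0 < p) :
    ∀ r : ℝ, 0 < r → ∃ C : ℝ, 0 < C ∧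
      ∀ (hx hy : ℝ), 0 < hx → hx < 1 → 0 < hy → hy < 1 →
      ∀ (N : ℕ) (k : ℝ), 1 ≤ N → k = T / N →
      ∀ (Ω : Type) [MeasureSpace Ω] [IsProbabilityMeasure (ℙ : Measure Ω)],
      ∀ (Z Z' : Fin N → Ω → ℝ),
        (∀ n, Measurable (Z n)) → (∀ n, Measurable (Z' n)) →
        iIndepFun (Sum.elim Z Z') ℙ →
        (∀ n, Measure.map (Z n) ℙ = gaussianReal 0 1) →
        (∀ n, Measure.map (Z' n) ℙ = gaussianReal 0 1) →
      ∀ (X : ℝ → ℝ → Ω → ℂ),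
        (∀ ξ η ω, X ξ η ω = Complex.exp
          (-((1 - ρx) * ξ ^ 2 * T / 2 : ℝ) - ((1 - ρy) * η ^ 2 * T / 2 : ℝ)
            - Complex.I * (ξ * Real.sqrt (ρx * k) * ∑ n : Fin N, Z n ω : ℝ)
            - Complex.I * (η * Real.sqrt (ρy * k) *
                ∑ n : Fin N, (ρxy * Z n ω + Real.sqrt (1 - ρxy ^ 2) * Z' n ω) : ℝ))) →
        (∫ ω, ‖(∫ q in {q : ℝ × ℝ |
            |q.1| ≤ hx ^ (-p) ∧ hy ^ (-p) ≤ |q.2| ∧ |q.2| ≤ π / hy},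
            X q.1 q.2 ω)‖ ^ 2 ∂ℙ)
          ≤ C * hy ^ r := by
  intro r _
  set a := (1 - ρx) * T / 2
  set b := (1 - ρy) * T / 2
  have ha : 0 < a := by positivity [sub_pos.2 hρx1]
  have hb : 0 < b := by positivity [sub_pos.2 hρy1]
  obtain ⟨C, hC, hdecay⟩ := exp_neg_mul_rpow_neg_le hb (by positivity : 0 < 2 * p) r
  refine ⟨π / a * (π / (b / 2)) * C, by positivity, ?_⟩
  intro hx hy _ _ hy0 hy1 N k _ _ Ω _ _ Z Z' _ _ _ _ _ X hX
  have hsq : (hy ^ (-p)) ^ 2 = hy ^ (-(2 * p)) := by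
    rw [← rpow_mul_natCast hy0.le]
    ring_nf
  have hpointwise : ∀ ω, ‖∫ q in {q : ℝ × ℝ |
      |q.1| ≤ hx ^ (-p) ∧ hy ^ (-p) ≤ |q.2| ∧ |q.2| ≤ π / hy}, X q.1 q.2 ω‖ ^ 2 ≤
      π / a * (π / (b / 2)) * rexp (-(b * hy ^ (-(2 * p)))) := fun ω => by
    refine hsq ▸ sq_norm_setIntegral_le_of_norm_le_gaussian ha hb (by positivity)
      (fun q hq => hq.2.1) fun q => le_of_eq ?_
    rw [hX, norm_exp_neg_sub_I_mul_sub_I_mul]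
    congr 2 <;> simp only [a, b] <;> ring
  calc _ ≤ ∫ _ : Ω, π / a * (π / (b / 2)) * rexp (-(b * hy ^ (-(2 * p)))) :=
        integral_mono_of_nonneg (.of_forall fun _ => by positivity) (integrable_const _)
          (.of_forall hpointwise)
    _ ≤ π / a * (π / (b / 2)) * (C * hy ^ r) := by
        rw [integral_const, probReal_univ, one_smul]
        exact mul_le_mul_of_nonneg_left (hdecay hy hy0 hy1) (by positivity)
    _ = π / a * (π / (b / 2)) * C * hy ^ r := by ring

/-- Middle wave region estimate for the exact Fourier-mode solution:
`E[|∬_{Ω_mid¹} X(T,ξ,η) dξ dη|²] ≤ C h_y^r`. -/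
theorem middle_wave_region_estimate_exact
    (ρx ρy ρxy T p : ℝ)
    (hρx0 : 0 ≤ ρx) (hρx1 : ρx < 1) (hρy0 : 0 ≤ ρy) (hρy1 : ρy < 1)
    (hρxy : |ρxy| ≤ 1) (hT : 0 < T) (hp0 : 0 < p) (hp1 : p < 1 / 2) :
    ∀ r : ℝ, 0 < r → ∃ C : ℝ, 0 < C ∧
      ∀ (hx hy : ℝ), 0 < hx → hx < 1 → 0 < hy → hy < 1 →
      ∀ (N : ℕ) (k : ℝ), 1 ≤ N → k = T / N →
      ∀ (Ω : Type) [MeasureSpace Ω] [IsProbabilityMeasure (ℙ : Measure Ω)],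
      ∀ (Z Z' : Fin N → Ω → ℝ),
        (∀ n, Measurable (Z n)) → (∀ n, Measurable (Z' n)) →
        iIndepFun (Sum.elim Z Z') ℙ →
        (∀ n, Measure.map (Z n) ℙ = gaussianReal 0 1) →
        (∀ n, Measure.map (Z' n) ℙ = gaussianReal 0 1) →
      ∀ (X : ℝ → ℝ → Ω → ℂ),
        (∀ ξ η ω, X ξ η ω = Complex.exp
          (-((1 - ρx) * ξ ^ 2 * T / 2 : ℝ) - ((1 - ρy) * η ^ 2 * T / 2 : ℝ)
            - Complex.I * (ξ * Real.sqrt (ρx * k) * ∑ n : Fin N, Z n ω : ℝ)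
            - Complex.I * (η * Real.sqrt (ρy * k) *
                ∑ n : Fin N, (ρxy * Z n ω + Real.sqrt (1 - ρxy ^ 2) * Z' n ω) : ℝ))) →
        (∫ ω, ‖(∫ q in {q : ℝ × ℝ |
            |q.1| ≤ hx ^ (-p) ∧ hy ^ (-p) ≤ |q.2| ∧ |q.2| ≤ π / hy},
            X q.1 q.2 ω)‖ ^ 2 ∂ℙ)
          ≤ C * hy ^ r :=
  middle_wave_region_estimate_exact_general ρx ρy ρxy T p hρx1 hρy1 hT hp0
end

section
/- (Abstract two-dimensional combination-technique convergence.) Let E be a real normed vector space, P ∈ E, and Q : ℕ₀ × ℕ₀ → E. Assume (i) ‖ΔQ(l₁,l₂)‖ ≤ C₁·4^{−(l₁+l₂)} for all (l₁,l₂) ∈ ℕ₀² and some constant C₁ > 0, and (ii) Q(m,m) → P in E as m → ∞. Then for every integer L ≥ 0: ‖ ∑_{(l₁,l₂) ∈ ℕ₀², l₁+l₂ ≤ L+1} ΔQ(l₁,l₂) − P ‖ ≤ C₁ · ((3L+10)/9) · 4^{−(L+1)}. -/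
/-!
The mixed differences telescope: their sum over the square `[0, m]²` is `Q m m`. Together with
the summable majorant `C₁ 4^{-(l₁+l₂)}` this forces the double series of the `ΔQ` to converge to
`P` (without completeness of `E`, because the square partial sums already converge). The error of
the triangular partial sum is the tail of that series, bounded by the tail of the majorant,
`C₁ ∑_{k ≥ L+2} (k+1) 4^{-k} = C₁ (3L+10)/9 · 4^{-(L+1)}`.
-/

open Finset Filter Topology

section MixedDifference

variable {E : Type*} [AddCommGroup E]

theorem sum_range_prod_range_mixed_sub (R : ℕ → ℕ → E) (m n : ℕ) :
    ∑ p ∈ range m ×ˢ range n,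
        (R (p.1 + 1) (p.2 + 1) - R p.1 (p.2 + 1) - R (p.1 + 1) p.2 + R p.1 p.2) =
      R m n - R 0 n - R m 0 + R 0 0 := by
  have hrow : ∀ i, ∑ j ∈ range n,
      (R (i + 1) (j + 1) - R i (j + 1) - R (i + 1) j + R i j) =
        (R (i + 1) n - R (i + 1) 0) - (R i n - R i 0) := by
    intro i
    calc _ = ∑ j ∈ range n, ((R (i + 1) (j + 1) - R i (j + 1)) - (R (i + 1) j - R i j)) :=
          sum_congr rfl fun j _ => by abel
      _ = _ := by rw [sum_range_sub (fun j => R (i + 1) j - R i j)]; abel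
  rw [sum_product]
  simp_rw [hrow]
  rw [sum_range_sub (fun i => R i n - R i 0)]
  abel

def mixedDiff (Q : ℕ → ℕ → E) (l₁ l₂ : ℕ) : E :=
  Q l₁ l₂ - (if 0 < l₁ then Q (l₁ - 1) l₂ else 0)
    - (if 0 < l₂ then Q l₁ (l₂ - 1) else 0)
    + (if 0 < l₁ ∧ 0 < l₂ then Q (l₁ - 1) (l₂ - 1) else 0)

theorem sum_mixedDiff_range_prod_range (Q : ℕ → ℕ → E) (m n : ℕ) :
    ∑ p ∈ range (m + 1) ×ˢ range (n + 1), mixedDiff Q p.1 p.2 = Q m n := by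
  -- `Q` shifted by one index in each variable and extended by zero; `mixedDiff Q` is the mixed
  -- forward difference of `R`, so the sum over a rectangle telescopes.
  set R : ℕ → ℕ → E := fun i j => if 0 < i ∧ 0 < j then Q (i - 1) (j - 1) else 0
  have hR : ∀ i j, mixedDiff Q i j =
      R (i + 1) (j + 1) - R i (j + 1) - R (i + 1) j + R i j := by
    intro i j
    cases i <;> cases j <;> simp [mixedDiff, R]
  simp_rw [hR, sum_range_prod_range_mixed_sub]
  simp [R]

end MixedDifference

theorem sum_range_add_one_mul_inv_four_pow (n : ℕ) :
    ∑ k ∈ range n, ((k : ℝ) + 1) * ((4 : ℝ) ^ k)⁻¹ =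
      (16 - (12 * n + 16) * ((4 : ℝ) ^ n)⁻¹) / 9 := by
  induction n with
  | zero => norm_num
  | succ n ih =>
    rw [sum_range_succ, ih]
    push_cast
    field_simp
    ring

theorem sum_triangle_comp_add_eq_sum_range_nsmul {M : Type*} [AddCommMonoid M] (φ : ℕ → M)
    (n : ℕ) :
    ∑ p ∈ range (n + 1) ×ˢ range (n + 1) with p.1 + p.2 ≤ n, φ (p.1 + p.2) =
      ∑ k ∈ range (n + 1), (k + 1) • φ k := by
  rw [← sum_fiberwise_of_maps_to' (g := fun p : ℕ × ℕ => p.1 + p.2) (t := range (n + 1))]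
  · refine sum_congr rfl fun k hk => ?_
    have hfiber : ((range (n + 1) ×ˢ range (n + 1)).filter (fun p => p.1 + p.2 ≤ n)).filter
        (fun p => p.1 + p.2 = k) = antidiagonal k := by
      ext ⟨a, b⟩
      simp only [mem_filter, mem_product, mem_range, HasAntidiagonal.mem_antidiagonal] at hk ⊢
      omega
    rw [hfiber, sum_const, Nat.card_antidiagonal]
  · intro p hp
    simp only [mem_filter, mem_product, mem_range] at hp ⊢
    omega

theorem hasSum_inv_four_pow_add :
    HasSum (fun p : ℕ × ℕ => ((4 : ℝ) ^ (p.1 + p.2))⁻¹) (16 / 9) := by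
  have hgeom : HasSum (fun n : ℕ => (4 : ℝ)⁻¹ ^ n) (4 / 3) := by
    convert hasSum_geometric_of_lt_one (r := (4 : ℝ)⁻¹) (by norm_num) (by norm_num) using 1
    norm_num
  have hprod := hgeom.mul hgeom (hgeom.summable.mul_of_nonneg hgeom.summable
    (fun _ => by positivity) (fun _ => by positivity))
  rw [show (16 : ℝ) / 9 = 4 / 3 * (4 / 3) by norm_num]
  simpa only [pow_add, mul_inv, inv_pow] using hprod

theorem HasSum.norm_sum_sub_le {ι E : Type*} [SeminormedAddCommGroup E] {f : ι → E} {g : ι → ℝ}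
    {a : E} {b : ℝ} (hf : HasSum f a) (hg : HasSum g b) (h : ∀ i, ‖f i‖ ≤ g i) (s : Finset ι) :
    ‖∑ i ∈ s, f i - a‖ ≤ b - ∑ i ∈ s, g i := by
  rw [norm_sub_rev]
  exact (s.hasSum_iff_compl.1 hf).norm_le_of_bounded (s.hasSum_iff_compl.1 hg) fun i => h i

theorem hasSum_mixedDiff_of_tendsto_diag {E : Type*} [SeminormedAddCommGroup E]
    {Q : ℕ → ℕ → E} {g : ℕ × ℕ → ℝ} (hg : Summable g) (h : ∀ p, ‖mixedDiff Q p.1 p.2‖ ≤ g p)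
    {P : E} (hQ : Tendsto (fun m => Q m m) atTop (𝓝 P)) :
    HasSum (fun p : ℕ × ℕ => mixedDiff Q p.1 p.2) P := by
  have hsquares : Tendsto (fun m => range (m + 1) ×ˢ range (m + 1)) atTop atTop := by
    refine tendsto_atTop_finset_of_monotone (fun a b hab => ?_) fun p => ⟨p.1 + p.2, ?_⟩
    · exact product_subset_product (range_subset_range.2 (by omega))
        (range_subset_range.2 (by omega))
    · simp only [mem_product, mem_range]; omega
  refine hasSum_of_subseq_of_summable
    (hg.of_nonneg_of_le (fun _ => norm_nonneg _) h) hsquares ?_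
  simpa only [sum_mixedDiff_range_prod_range] using hQ

theorem combination_technique_convergence_two_dim_general
    (E : Type*) [NormedAddCommGroup E]
    (P : E) (Q : ℕ → ℕ → E) (DQ : ℕ → ℕ → E)
    (hDQ : ∀ l₁ l₂, DQ l₁ l₂ =
      Q l₁ l₂ - (if 0 < l₁ then Q (l₁ - 1) l₂ else 0)
        - (if 0 < l₂ then Q l₁ (l₂ - 1) else 0)
        + (if 0 < l₁ ∧ 0 < l₂ then Q (l₁ - 1) (l₂ - 1) else 0))
    (C₁ : ℝ)
    (hbound : ∀ l₁ l₂ : ℕ, ‖DQ l₁ l₂‖ ≤ C₁ * ((4 : ℝ) ^ (l₁ + l₂))⁻¹)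
    (hconv : Filter.Tendsto (fun m => Q m m) Filter.atTop (nhds P)) :
    ∀ L : ℕ,
      ‖(∑ q ∈ Finset.filter (fun q => q.1 + q.2 ≤ L + 1)
          (Finset.range (L + 2) ×ˢ Finset.range (L + 2)), DQ q.1 q.2) - P‖ ≤
        C₁ * ((3 * (L : ℝ) + 10) / 9) * ((4 : ℝ) ^ (L + 1))⁻¹ := by
  obtain rfl : DQ = mixedDiff Q := funext fun l₁ => funext (hDQ l₁)
  have hmajorant := hasSum_inv_four_pow_add.mul_left C₁
  have hsum := hasSum_mixedDiff_of_tendsto_diag hmajorant.summable (fun p => hbound p.1 p.2) hconv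
  intro L
  calc _ ≤ C₁ * (16 / 9) - ∑ p ∈ range (L + 1 + 1) ×ˢ range (L + 1 + 1) with p.1 + p.2 ≤ L + 1,
          C₁ * ((4 : ℝ) ^ (p.1 + p.2))⁻¹ :=
        hsum.norm_sum_sub_le hmajorant (fun p => hbound p.1 p.2) _
    _ = _ := by
      simp only [← mul_sum, sum_triangle_comp_add_eq_sum_range_nsmul (fun k => ((4 : ℝ) ^ k)⁻¹),
        nsmul_eq_mul, Nat.cast_add_one, sum_range_add_one_mul_inv_four_pow]
      field_simp
      ring

/-- Abstract two-dimensional combination-technique convergence. -/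
theorem combination_technique_convergence_two_dim
    (E : Type*) [NormedAddCommGroup E] [NormedSpace ℝ E]
    (P : E) (Q : ℕ → ℕ → E) (DQ : ℕ → ℕ → E)
    (hDQ : ∀ l₁ l₂, DQ l₁ l₂ =
      Q l₁ l₂ - (if 0 < l₁ then Q (l₁ - 1) l₂ else 0)
        - (if 0 < l₂ then Q l₁ (l₂ - 1) else 0)
        + (if 0 < l₁ ∧ 0 < l₂ then Q (l₁ - 1) (l₂ - 1) else 0))
    (C₁ : ℝ) (hC₁ : 0 < C₁)
    (hbound : ∀ l₁ l₂ : ℕ, ‖DQ l₁ l₂‖ ≤ C₁ * ((4 : ℝ) ^ (l₁ + l₂))⁻¹)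
    (hconv : Filter.Tendsto (fun m => Q m m) Filter.atTop (nhds P)) :
    ∀ L : ℕ,
      ‖(∑ q ∈ Finset.filter (fun q => q.1 + q.2 ≤ L + 1)
          (Finset.range (L + 2) ×ˢ Finset.range (L + 2)), DQ q.1 q.2) - P‖ ≤
        C₁ * ((3 * (L : ℝ) + 10) / 9) * ((4 : ℝ) ^ (L + 1))⁻¹ :=
  combination_technique_convergence_two_dim_general E P Q DQ hDQ C₁ hbound hconv
end

section
/- (Multilevel Monte Carlo complexity for the sparse combination estimator.) Let d ≥ 1 be an integer and C₁, C₂, C₃ > 0. Let (e_l)_{l≥0}, (v_l)_{l≥0}, (w_l)_{l≥0} be sequences of nonnegative reals satisfying e_l ≤ C₁·(l+1)^{d−1}·2^{−2l}, v_l ≤ C₂·(l+1)^{2(d−1)}·2^{−4l}, and w_l ≤ C₃·(l+1)^{d−1}·2^{3l} for all l. Then there exists C > 0 such that for every ε ∈ (0,1) there exist an integer L ≥ 0 and positive integers M₀,…,M_L with (∑_{l>L} e_l)² + ∑_{l=0}^{L} v_l/M_l ≤ ε² and ∑_{l=0}^{L} M_l·w_l ≤ C·ε^{−2}. -/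
/-!
The factors `(l + 1) ^ k` are absorbed into geometric rates at the price of a factor `9/8`
per level, which leaves `e_l ≲ r^l`, `v_l ≲ s^l` and `w_l ≲ t^l` with `r = 9/32`, `s = 9/128`,
`t = 9`: variance decays faster than cost grows (`s t < 1`) and the bias decays at least at
half the rate of cost growth (`r² t ≤ 1`). Taking for `L` the first level whose tail bias is
below `ε / 2` bounds the cost `t^L` of the finest level by `ε⁻²`. With `M_l ≈ ε⁻² q^l` for some
`s < q < 1/t`, both `∑ v_l / M_l` and `∑ M_l w_l` are geometric series with ratios `s/q < 1`
and `q t < 1`, of sizes `O(ε²)` and `O(ε⁻²) + O(t^L)`.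
-/

open Finset

lemma exists_pow_le_mul_pow (k : ℕ) {ρ : ℝ} (hρ : 1 < ρ) :
    ∃ K : ℝ, 0 < K ∧ ∀ l : ℕ, ((l : ℝ) + 1) ^ k ≤ K * ρ ^ l := by
  obtain ⟨K₀, hK₀⟩ := ((tendsto_pow_const_div_const_pow_of_one_lt k hρ).comp
    (Filter.tendsto_add_atTop_nat 1)).bddAbove_range
  refine ⟨max (K₀ * ρ) 1, by positivity, fun l => ?_⟩
  have hl : ((l : ℝ) + 1) ^ k / ρ ^ (l + 1) ≤ K₀ := by
    simpa using hK₀ ⟨l, rfl⟩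
  calc ((l : ℝ) + 1) ^ k ≤ K₀ * ρ ^ (l + 1) := by
        rwa [div_le_iff₀ (by positivity)] at hl
    _ = K₀ * ρ * ρ ^ l := by ring
    _ ≤ max (K₀ * ρ) 1 * ρ ^ l := by gcongr; exact le_max_left _ _

lemma le_mul_pow_of_le_poly_mul_pow {f : ℕ → ℝ} {C K x ρ : ℝ} {k : ℕ} (hC : 0 ≤ C)
    (hx : 0 ≤ x) (hK : ∀ l : ℕ, ((l : ℝ) + 1) ^ k ≤ K * ρ ^ l)
    (hf : ∀ l, f l ≤ C * ((l : ℝ) + 1) ^ k * x ^ l) (l : ℕ) :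
    f l ≤ C * K * (ρ * x) ^ l :=
  calc f l ≤ C * ((l : ℝ) + 1) ^ k * x ^ l := hf l
    _ ≤ C * (K * ρ ^ l) * x ^ l := by gcongr; exact hK l
    _ = C * K * (ρ * x) ^ l := by ring

lemma tsum_tail_le_of_le_geometric {e : ℕ → ℝ} {a r : ℝ} (he0 : ∀ l, 0 ≤ e l)
    (he : ∀ l, e l ≤ a * r ^ l) (hr0 : 0 ≤ r) (hr1 : r < 1) (L : ℕ) :
    ∑' l : {n : ℕ // L < n}, e l ≤ a * r ^ (L + 1) / (1 - r) := by
  let shift : ℕ ≃ {n : ℕ // L < n} := (notMemRangeEquiv (L + 1)).symm.trans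
    (Equiv.subtypeEquivRight (p := fun n => n ∉ Finset.range (L + 1))
      (q := fun n => L < n) fun n => by rw [Finset.mem_range]; omega)
  have hgeom : HasSum (fun j => a * r ^ (L + 1) * r ^ j) (a * r ^ (L + 1) / (1 - r)) := by
    simpa only [div_eq_mul_inv] using (hasSum_geometric_of_lt_one hr0 hr1).mul_left _
  have hbound : ∀ j, e (shift j) ≤ a * r ^ (L + 1) * r ^ j := fun j => by
    simpa [shift, pow_add, mul_assoc, mul_comm, mul_left_comm] using he (j + (L + 1))
  rw [← shift.tsum_eq]
  exact (Summable.of_nonneg_of_le (fun j => he0 _) hbound hgeom.summable).tsum_le_tsum hbound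
    hgeom.summable |>.trans_eq hgeom.tsum_eq

lemma geom_sum_range_le_inv_one_sub {x : ℝ} (hx0 : 0 ≤ x) (hx1 : x < 1) (n : ℕ) :
    ∑ l ∈ range n, x ^ l ≤ (1 - x)⁻¹ := by
  rw [range_eq_Ico, ← one_div, ← pow_zero x]
  exact geom_sum_Ico_le_of_lt_one hx0 hx1

lemma geom_sum_range_succ_le {t : ℝ} (ht : 1 < t) (n : ℕ) :
    ∑ l ∈ range (n + 1), t ^ l ≤ t / (t - 1) * t ^ n := by
  rw [geom_sum_eq ht.ne', div_mul_eq_mul_div, ← pow_succ']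
  gcongr
  linarith

lemma sum_range_div_le_of_le_geometric {v : ℕ → ℝ} {M : ℕ → ℕ} {b s N q : ℝ}
    (hv : ∀ l, v l ≤ b * s ^ l) (hM : ∀ l, N * q ^ l ≤ M l) (hb : 0 ≤ b) (hs : 0 ≤ s)
    (hN : 0 < N) (hsq : s < q) (n : ℕ) :
    ∑ l ∈ range n, v l / M l ≤ b / (N * (1 - s / q)) := by
  have hq : 0 < q := hs.trans_lt hsq
  have hterm : ∀ l, v l / M l ≤ b / N * (s / q) ^ l := fun l => by
    have hX : 0 < N * q ^ l := by positivity
    calc v l / M l ≤ b * s ^ l / M l := by gcongr; exact hv l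
      _ ≤ b * s ^ l / (N * q ^ l) := by gcongr; exact hM l
      _ = b / N * (s / q) ^ l := by rw [div_pow]; field_simp
  calc ∑ l ∈ range n, v l / M l ≤ ∑ l ∈ range n, b / N * (s / q) ^ l :=
        sum_le_sum fun l _ => hterm l
    _ = b / N * ∑ l ∈ range n, (s / q) ^ l := (mul_sum _ _ _).symm
    _ ≤ b / N * (1 - s / q)⁻¹ := by
        gcongr
        exact geom_sum_range_le_inv_one_sub (div_nonneg hs hq.le) ((div_lt_one hq).2 hsq) n
    _ = b / (N * (1 - s / q)) := by rw [← div_eq_mul_inv, div_div]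

lemma sum_range_mul_le_of_le_geometric {w : ℕ → ℝ} {M : ℕ → ℕ} {c t N q : ℝ}
    (hw : ∀ l, w l ≤ c * t ^ l) (hM : ∀ l, (M l : ℝ) ≤ N * q ^ l + 1) (hc : 0 ≤ c)
    (hN : 0 ≤ N) (hq : 0 ≤ q) (ht : 1 < t) (hqt : q * t < 1) (L : ℕ) :
    ∑ l ∈ range (L + 1), M l * w l ≤ c * N / (1 - q * t) + c * t / (t - 1) * t ^ L := by
  have hterm : ∀ l, M l * w l ≤ c * N * (q * t) ^ l + c * t ^ l := fun l =>
    calc M l * w l ≤ M l * (c * t ^ l) := by gcongr; exact hw l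
      _ ≤ (N * q ^ l + 1) * (c * t ^ l) := by gcongr; exact hM l
      _ = c * N * (q * t) ^ l + c * t ^ l := by ring
  calc ∑ l ∈ range (L + 1), M l * w l
      ≤ c * N * ∑ l ∈ range (L + 1), (q * t) ^ l + c * ∑ l ∈ range (L + 1), t ^ l := by
        rw [mul_sum, mul_sum, ← sum_add_distrib]
        exact sum_le_sum fun l _ => hterm l
    _ ≤ c * N * (1 - q * t)⁻¹ + c * (t / (t - 1) * t ^ L) := by
        gcongr
        · exact geom_sum_range_le_inv_one_sub (by positivity) hqt _
        · exact geom_sum_range_succ_le ht L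
    _ = c * N / (1 - q * t) + c * t / (t - 1) * t ^ L := by ring

lemma exists_pow_succ_lt_le_pow {r δ : ℝ} (hr0 : 0 < r) (hr1 : r < 1) (hδ0 : 0 < δ)
    (hδ1 : δ ≤ 1) : ∃ L : ℕ, r ^ (L + 1) < δ ∧ δ ≤ r ^ L := by
  obtain ⟨L, hle, hlt⟩ :=
    exists_nat_pow_near ((one_le_inv₀ hδ0).2 hδ1) ((one_lt_inv₀ hr0).2 hr1)
  rw [inv_pow, inv_le_inv₀ (by positivity) hδ0] at hle
  rw [inv_pow, inv_lt_inv₀ hδ0 (by positivity)] at hlt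
  exact ⟨L, hlt, hle⟩

lemma pow_le_inv_sq_of_le_pow {r t δ : ℝ} {L : ℕ} (hr : 0 < r) (ht : 0 ≤ t) (hδ : 0 < δ)
    (hrt : r ^ 2 * t ≤ 1) (hδL : δ ≤ r ^ L) : t ^ L ≤ δ⁻¹ ^ 2 :=
  calc t ^ L ≤ ((r ^ 2)⁻¹) ^ L := by
        gcongr
        rw [← one_div, le_div_iff₀ (by positivity), mul_comm]
        exact hrt
    _ = ((r ^ L)⁻¹) ^ 2 := by rw [inv_pow, inv_pow, ← pow_mul, ← pow_mul, mul_comm]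
    _ ≤ δ⁻¹ ^ 2 := by gcongr

theorem mlmc_complexity_of_geometric_rates {e v w : ℕ → ℝ} {a b c r s t : ℝ}
    (he0 : ∀ l, 0 ≤ e l) (he : ∀ l, e l ≤ a * r ^ l) (hv : ∀ l, v l ≤ b * s ^ l)
    (hw : ∀ l, w l ≤ c * t ^ l) (ha : 0 ≤ a) (hb : 0 < b) (hc : 0 < c) (hr0 : 0 < r)
    (hr1 : r < 1) (hs : 0 ≤ s) (ht : 1 < t) (hrt : r ^ 2 * t ≤ 1) (hst : s * t < 1) :
    ∃ C : ℝ, 0 < C ∧ ∀ ε : ℝ, 0 < ε → ε < 1 →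
      ∃ (L : ℕ) (M : ℕ → ℕ), (∀ l ≤ L, 0 < M l) ∧
        (∑' l : {n : ℕ // L < n}, e l) ^ 2
            + ∑ l ∈ Finset.range (L + 1), v l / (M l : ℝ) ≤ ε ^ 2 ∧
        ∑ l ∈ Finset.range (L + 1), (M l : ℝ) * w l ≤ C / ε ^ 2 := by
  obtain ⟨q, hsq, hqt⟩ : ∃ q, s < q ∧ q < 1 / t :=
    exists_between ((lt_div_iff₀ (by positivity)).2 hst)
  have hq : 0 < q := hs.trans_lt hsq
  rw [lt_div_iff₀ (by positivity)] at hqt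
  set B := max 1 (2 * a / (1 - r))
  set A := 2 * b / (1 - s / q)
  have hA : 0 < A := div_pos (by positivity) (sub_pos.2 ((div_lt_one hq).2 hsq))
  have hqt' : 0 < 1 - q * t := sub_pos.2 hqt
  have ht' : 0 < t - 1 := sub_pos.2 ht
  refine ⟨c * A / (1 - q * t) + c * t / (t - 1) * B ^ 2, by positivity, fun ε hε hε1 => ?_⟩
  have hB : 1 ≤ B := le_max_left _ _
  obtain ⟨L, hbias, hcost⟩ := exists_pow_succ_lt_le_pow hr0 hr1 (δ := ε / B) (by positivity)
    (div_le_one_of_le₀ (hε1.le.trans hB) (by positivity))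
  set N := A / ε ^ 2
  let M : ℕ → ℕ := fun l => ⌊N * q ^ l⌋₊ + 1
  have hM : ∀ l, N * q ^ l < M l := fun l => by
    simpa only [M, Nat.cast_add, Nat.cast_one] using Nat.lt_floor_add_one _
  refine ⟨L, M, fun l _ => Nat.succ_pos _, ?_, ?_⟩
  · have htail : ∑' l : {n : ℕ // L < n}, e l ≤ ε / 2 :=
      calc ∑' l : {n : ℕ // L < n}, e l ≤ a * r ^ (L + 1) / (1 - r) :=
            tsum_tail_le_of_le_geometric he0 he hr0.le hr1 L
        _ ≤ a * (ε / B) / (1 - r) := by gcongr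
        _ = 2 * a / (1 - r) / B * (ε / 2) := by ring
        _ ≤ ε / 2 := mul_le_of_le_one_left (by positivity)
            ((div_le_one (by positivity)).2 (le_max_right _ _))
    have hvar : ∑ l ∈ range (L + 1), v l / M l ≤ ε ^ 2 / 2 := by
      refine (sum_range_div_le_of_le_geometric hv (fun l => (hM l).le) hb.le hs
        (by positivity) hsq _).trans_eq ?_
      have : q - s ≠ 0 := (sub_pos.2 hsq).ne'
      simp only [N, A]
      field_simp
    have htail0 : 0 ≤ ∑' l : {n : ℕ // L < n}, e l := tsum_nonneg fun l => he0 l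
    nlinarith
  · have htL := pow_le_inv_sq_of_le_pow hr0 (by positivity) (by positivity) hrt hcost
    rw [inv_div] at htL
    have hM' : ∀ l, (M l : ℝ) ≤ N * q ^ l + 1 := fun l => by
      simpa only [M, Nat.cast_add, Nat.cast_one] using
        add_le_add_left (Nat.floor_le (by positivity)) 1
    calc ∑ l ∈ range (L + 1), (M l : ℝ) * w l
        ≤ c * N / (1 - q * t) + c * t / (t - 1) * t ^ L :=
          sum_range_mul_le_of_le_geometric hw hM' hc.le (by positivity) hq.le ht hqt L
      _ ≤ c * N / (1 - q * t) + c * t / (t - 1) * (B / ε) ^ 2 := by gcongr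
      _ = (c * A / (1 - q * t) + c * t / (t - 1) * B ^ 2) / ε ^ 2 := by
          simp only [N]; ring

theorem mlmc_sparse_combination_complexity_general
    (d : ℕ) (C₁ C₂ C₃ : ℝ) (hC₁ : 0 < C₁) (hC₂ : 0 < C₂) (hC₃ : 0 < C₃)
    (e v w : ℕ → ℝ)
    (he0 : ∀ l, 0 ≤ e l)
    (he : ∀ l, e l ≤ C₁ * ((l : ℝ) + 1) ^ (d - 1) * ((2 : ℝ) ^ (2 * l))⁻¹)
    (hv : ∀ l, v l ≤ C₂ * ((l : ℝ) + 1) ^ (2 * (d - 1)) * ((2 : ℝ) ^ (4 * l))⁻¹)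
    (hw : ∀ l, w l ≤ C₃ * ((l : ℝ) + 1) ^ (d - 1) * (2 : ℝ) ^ (3 * l)) :
    ∃ C : ℝ, 0 < C ∧ ∀ ε : ℝ, 0 < ε → ε < 1 →
      ∃ (L : ℕ) (M : ℕ → ℕ), (∀ l ≤ L, 0 < M l) ∧
        (∑' l : {n : ℕ // L < n}, e l) ^ 2
            + ∑ l ∈ Finset.range (L + 1), v l / (M l : ℝ) ≤ ε ^ 2 ∧
        ∑ l ∈ Finset.range (L + 1), (M l : ℝ) * w l ≤ C / ε ^ 2 := by
  obtain ⟨K₁, hK₁, hpoly₁⟩ :=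
    exists_pow_le_mul_pow (d - 1) (by norm_num : (1 : ℝ) < 9 / 8)
  obtain ⟨K₂, hK₂, hpoly₂⟩ :=
    exists_pow_le_mul_pow (2 * (d - 1)) (by norm_num : (1 : ℝ) < 9 / 8)
  have he' := le_mul_pow_of_le_poly_mul_pow (x := 1 / 4) hC₁.le (by norm_num) hpoly₁
    fun l => (he l).trans_eq (by rw [pow_mul (2 : ℝ), ← inv_pow]; norm_num)
  have hv' := le_mul_pow_of_le_poly_mul_pow (x := 1 / 16) hC₂.le (by norm_num) hpoly₂
    fun l => (hv l).trans_eq (by rw [pow_mul (2 : ℝ), ← inv_pow]; norm_num)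
  have hw' := le_mul_pow_of_le_poly_mul_pow (x := 8) hC₃.le (by norm_num) hpoly₁
    fun l => (hw l).trans_eq (by rw [pow_mul (2 : ℝ)]; norm_num)
  exact mlmc_complexity_of_geometric_rates he0 he' hv' hw' (by positivity) (by positivity)
    (by positivity) (by norm_num) (by norm_num) (by norm_num) (by norm_num) (by norm_num)
    (by norm_num)

/-- Multilevel Monte Carlo complexity for the sparse combination estimator:
total cost `O(ε⁻²)`. -/
theorem mlmc_sparse_combination_complexity
    (d : ℕ) (hd : 1 ≤ d) (C₁ C₂ C₃ : ℝ) (hC₁ : 0 < C₁) (hC₂ : 0 < C₂) (hC₃ : 0 < C₃)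
    (e v w : ℕ → ℝ)
    (he0 : ∀ l, 0 ≤ e l) (hv0 : ∀ l, 0 ≤ v l) (hw0 : ∀ l, 0 ≤ w l)
    (he : ∀ l, e l ≤ C₁ * ((l : ℝ) + 1) ^ (d - 1) * ((2 : ℝ) ^ (2 * l))⁻¹)
    (hv : ∀ l, v l ≤ C₂ * ((l : ℝ) + 1) ^ (2 * (d - 1)) * ((2 : ℝ) ^ (4 * l))⁻¹)
    (hw : ∀ l, w l ≤ C₃ * ((l : ℝ) + 1) ^ (d - 1) * (2 : ℝ) ^ (3 * l)) :
    ∃ C : ℝ, 0 < C ∧ ∀ ε : ℝ, 0 < ε → ε < 1 →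
      ∃ (L : ℕ) (M : ℕ → ℕ), (∀ l ≤ L, 0 < M l) ∧
        (∑' l : {n : ℕ // L < n}, e l) ^ 2
            + ∑ l ∈ Finset.range (L + 1), v l / (M l : ℝ) ≤ ε ^ 2 ∧
        ∑ l ∈ Finset.range (L + 1), (M l : ℝ) * w l ≤ C / ε ^ 2 :=
  mlmc_sparse_combination_complexity_general d C₁ C₂ C₃ hC₁ hC₂ hC₃ e v w he0 he hv hw
end

section
/- (Complexity of the sparse combination technique with standard Monte Carlo.) Let d ≥ 1 be an integer and C₁, C₂ > 0, V ≥ 0. Let (b_L)_{L≥0} and (w_L)_{L≥0} be sequences of nonnegative reals with b_L ≤ C₁·(L+1)^{d−1}·2^{−2L} and w_L ≤ C₂·(L+1)^{d−1}·2^{3L} for all L. Then there exists C > 0 (depending on d, C₁, C₂, V) such that for every ε ∈ (0,1/2) there exist an integer L ≥ 0 and a positive integer M with b_L² + V/M ≤ ε² and M·w_L ≤ C·ε^{−7/2}·(log(1/ε))^{5(d−1)/2}. -/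
/-!
Take the least level `L` whose bias bound `C₁ (L+1)^(d-1) 4^(-L)` is at most `ε/2`. Minimality
gives `4^L ≲ (L+1)^(d-1) / ε`; since `(L+1)^(d-1) ≲ 2^L` this forces `L = O(log (1/ε))`, and
`8^L = (4^L)^(3/2) ≲ (L+1)^(3(d-1)/2) ε^(-3/2)`. With `M ≈ 2V/ε²` samples the variance term is at
most `ε²/2`, so the cost is `M w_L ≲ ε^(-2) (L+1)^(d-1) 8^L ≲ ε^(-7/2) log(1/ε)^(5(d-1)/2)`.
-/

open Real

lemma exists_pow_le_mul_two_pow (e : ℕ) :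
    ∃ c : ℝ, 1 ≤ c ∧ ∀ n : ℕ, ((n : ℝ) + 1) ^ e ≤ c * 2 ^ n := by
  obtain ⟨c₀, hc₀⟩ := (tendsto_pow_const_div_const_pow_of_one_lt e one_lt_two).bddAbove_range
  refine ⟨max (2 * c₀) 1, le_max_right _ _, fun n => ?_⟩
  have h : ((n + 1 : ℕ) : ℝ) ^ e / 2 ^ (n + 1) ≤ c₀ := hc₀ ⟨n + 1, rfl⟩
  rw [div_le_iff₀ (by positivity)] at h
  push_cast at h
  calc ((n : ℝ) + 1) ^ e ≤ 2 * c₀ * 2 ^ n := by rw [pow_succ] at h; linarith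
    _ ≤ max (2 * c₀) 1 * 2 ^ n := by gcongr; exact le_max_left _ _

lemma exists_level_with_bias_le {C δ : ℝ} (n : ℕ) (hC : 0 ≤ C) (hδ : 0 < δ) (hδ1 : δ ≤ 1) :
    ∃ L : ℕ, C * ((L : ℝ) + 1) ^ n * ((2 : ℝ) ^ (2 * L))⁻¹ ≤ δ ∧
      δ * 2 ^ (2 * L) ≤ (4 * C + 1) * ((L : ℝ) + 1) ^ n := by
  classical
  have hex : ∃ L : ℕ, C * ((L : ℝ) + 1) ^ n * ((2 : ℝ) ^ (2 * L))⁻¹ ≤ δ := by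
    obtain ⟨c, -, hc⟩ := exists_pow_le_mul_two_pow n
    obtain ⟨m, hm⟩ := pow_unbounded_of_one_lt (C * c / δ) one_lt_two
    refine ⟨m, ?_⟩
    rw [div_lt_iff₀ hδ] at hm
    calc C * ((m : ℝ) + 1) ^ n * ((2 : ℝ) ^ (2 * m))⁻¹
        ≤ C * (c * 2 ^ m) * ((2 : ℝ) ^ (2 * m))⁻¹ := by gcongr; exact hc m
      _ = C * c / 2 ^ m := by rw [two_mul, pow_add]; field_simp
      _ ≤ δ := by rw [div_le_iff₀ (by positivity)]; linarith
  -- the least such level: one level earlier the bias bound still exceeds `δ`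
  refine ⟨Nat.find hex, Nat.find_spec hex, ?_⟩
  rcases h : Nat.find hex with _ | k
  · have : (1 : ℝ) ≤ 4 * C + 1 := by linarith
    simpa using hδ1.trans this
  · have hk := Nat.find_min hex (show k < Nat.find hex by omega)
    rw [not_le, lt_mul_inv_iff₀ (by positivity)] at hk
    have hmono : ((k : ℝ) + 1) ^ n ≤ ((k + 1 : ℕ) + 1 : ℝ) ^ n := by gcongr; linarith
    calc δ * 2 ^ (2 * (k + 1)) = 4 * (δ * 2 ^ (2 * k)) := by ring
      _ ≤ 4 * (C * ((k : ℝ) + 1) ^ n) := by linarith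
      _ ≤ 4 * C * ((k + 1 : ℕ) + 1 : ℝ) ^ n := by rw [← mul_assoc]; gcongr
      _ ≤ (4 * C + 1) * ((k + 1 : ℕ) + 1 : ℝ) ^ n := by gcongr; linarith

lemma succ_le_mul_log_one_div_of_two_pow_le {A ε : ℝ} {L : ℕ} (hA : 1 ≤ A) (hε : 0 < ε)
    (hε2 : ε ≤ 1 / 2) (h : (2 : ℝ) ^ L ≤ A / ε) :
    (L : ℝ) + 1 ≤ (log A / log 2 + 2) / log 2 * log (1 / ε) := by
  have hlog2 : 0 < log 2 := log_pos one_lt_two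
  have hℓ : log 2 ≤ log (1 / ε) := log_le_log two_pos (by rw [le_div_iff₀ hε]; linarith)
  have hL : L * log 2 ≤ log A + log (1 / ε) := by
    have := log_le_log (by positivity) h
    rwa [log_pow, div_eq_mul_one_div A ε, log_mul (by positivity) (by positivity)] at this
  have hA' : log A ≤ log A / log 2 * log (1 / ε) := by
    rw [div_mul_eq_mul_div, le_div_iff₀ hlog2]
    exact mul_le_mul_of_nonneg_left hℓ (log_nonneg hA)
  rw [div_mul_eq_mul_div, le_div_iff₀ hlog2]
  linarith

lemma exists_sample_size {V η : ℝ} (hV : 0 ≤ V) (hη : 0 < η) :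
    ∃ M : ℕ, 0 < M ∧ V / M ≤ η ∧ M * η ≤ V + 2 * η := by
  refine ⟨⌈V / η⌉₊ + 1, Nat.succ_pos _, ?_, ?_⟩
  · have := Nat.le_ceil (V / η)
    rw [div_le_iff₀ hη] at this
    rw [div_le_iff₀ (by positivity)]
    push_cast
    nlinarith
  · have := mul_lt_mul_of_pos_right (Nat.ceil_lt_add_one (div_nonneg hV hη.le)) hη
    rw [add_mul, div_mul_cancel₀ V hη.ne'] at this
    push_cast
    linarith

lemma two_pow_three_mul_le {D X ε : ℝ} {L : ℕ} (hD : 0 ≤ D) (hX : 0 ≤ X) (hε : 0 < ε)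
    (h : ε * 2 ^ (2 * L) ≤ D * X) :
    (2 : ℝ) ^ (3 * L) ≤ D ^ ((3 : ℝ) / 2) * X ^ ((3 : ℝ) / 2) * ε ^ (-(3 : ℝ) / 2) := by
  have h2 : (2 : ℝ) ^ (2 * L) ≤ D * X * ε⁻¹ := by
    rw [← div_eq_mul_inv, le_div_iff₀ hε]; linarith
  calc (2 : ℝ) ^ (3 * L) = ((2 : ℝ) ^ (2 * L)) ^ ((3 : ℝ) / 2) := by
        rw [← rpow_natCast, ← rpow_natCast, ← rpow_mul two_pos.le]; push_cast; ring_nf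
    _ ≤ (D * X * ε⁻¹) ^ ((3 : ℝ) / 2) := by gcongr
    _ = D ^ ((3 : ℝ) / 2) * X ^ ((3 : ℝ) / 2) * ε ^ (-(3 : ℝ) / 2) := by
        rw [mul_rpow (by positivity) (by positivity), mul_rpow hD hX, inv_rpow hε.le,
          ← rpow_neg hε.le, neg_div]

lemma cost_le_of_level_bounds {M w K₁ K₂ D B ε ℓ : ℝ} {L n : ℕ} (hM0 : 0 ≤ M) (hK₂ : 0 ≤ K₂)
    (hD : 0 ≤ D) (hB : 0 ≤ B) (hε : 0 < ε) (hM : M * ε ^ 2 ≤ K₁)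
    (hw : w ≤ K₂ * ((L : ℝ) + 1) ^ n * 2 ^ (3 * L))
    (hL2 : ε * 2 ^ (2 * L) ≤ D * ((L : ℝ) + 1) ^ n) (hLℓ : (L : ℝ) + 1 ≤ B * ℓ) :
    M * w ≤ K₁ * K₂ * D ^ ((3 : ℝ) / 2) * B ^ (5 * (n : ℝ) / 2) * ε ^ (-(7 : ℝ) / 2) *
      ℓ ^ (5 * (n : ℝ) / 2) := by
  set x := (L : ℝ) + 1
  have hx : 0 < x := by positivity
  have hℓ : 0 ≤ ℓ := by nlinarith
  have hK₁ : 0 ≤ K₁ := le_trans (by positivity) hM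
  have hx_pow : x ^ n * (x ^ n) ^ ((3 : ℝ) / 2) = x ^ (5 * (n : ℝ) / 2) := by
    rw [← rpow_natCast, ← rpow_mul hx.le, ← rpow_add hx]; ring_nf
  have hε_pow : (ε ^ 2)⁻¹ * ε ^ (-(3 : ℝ) / 2) = ε ^ (-(7 : ℝ) / 2) := by
    rw [← rpow_two, ← rpow_neg hε.le, ← rpow_add hε]; norm_num
  calc M * w ≤ M * (K₂ * x ^ n *
        (D ^ ((3 : ℝ) / 2) * (x ^ n) ^ ((3 : ℝ) / 2) * ε ^ (-(3 : ℝ) / 2))) := by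
        gcongr; exact hw.trans (by gcongr; exact two_pow_three_mul_le hD (by positivity) hε hL2)
    _ = (M * ε ^ 2) * (K₂ * D ^ ((3 : ℝ) / 2)) * (x ^ n * (x ^ n) ^ ((3 : ℝ) / 2)) *
        ((ε ^ 2)⁻¹ * ε ^ (-(3 : ℝ) / 2)) := by field_simp
    _ ≤ K₁ * (K₂ * D ^ ((3 : ℝ) / 2)) * (B * ℓ) ^ (5 * (n : ℝ) / 2) * ε ^ (-(7 : ℝ) / 2) := by
        rw [hx_pow, hε_pow]; gcongr
    _ = _ := by rw [mul_rpow hB hℓ]; ring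

theorem sparse_combination_standard_mc_complexity_general
    (d : ℕ) (hd : 1 ≤ d) (C₁ C₂ V : ℝ) (hC₁ : 0 < C₁) (hC₂ : 0 < C₂) (hV : 0 ≤ V)
    (b w : ℕ → ℝ) (hb0 : ∀ L, 0 ≤ b L)
    (hb : ∀ L, b L ≤ C₁ * ((L : ℝ) + 1) ^ (d - 1) * ((2 : ℝ) ^ (2 * L))⁻¹)
    (hw : ∀ L, w L ≤ C₂ * ((L : ℝ) + 1) ^ (d - 1) * (2 : ℝ) ^ (3 * L)) :
    ∃ C : ℝ, 0 < C ∧ ∀ ε : ℝ, 0 < ε → ε < 1 / 2 →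
      ∃ (L : ℕ) (M : ℕ), 0 < M ∧
        b L ^ 2 + V / (M : ℝ) ≤ ε ^ 2 ∧
        (M : ℝ) * w L ≤
          C * ε ^ (-(7 : ℝ) / 2) * (Real.log (1 / ε)) ^ ((5 * ((d : ℝ) - 1)) / 2) := by
  obtain ⟨n, rfl⟩ : ∃ n, d = n + 1 := ⟨d - 1, by omega⟩
  simp only [add_tsub_cancel_right, Nat.cast_add, Nat.cast_one] at hb hw ⊢
  obtain ⟨c, hc1, hc⟩ := exists_pow_le_mul_two_pow n
  set D := 2 * (4 * C₁ + 1)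
  have hD1 : 1 ≤ D := by linarith
  set B := (log (D * c) / log 2 + 2) / log 2
  have hB : 0 < B := by
    have := log_nonneg (one_le_mul_of_one_le_of_one_le hD1 hc1)
    have := log_pos one_lt_two
    positivity
  refine ⟨2 * (V + 1) * C₂ * D ^ ((3 : ℝ) / 2) * B ^ (5 * (n : ℝ) / 2), by positivity,
    fun ε hε hε2 => ?_⟩
  obtain ⟨L, hbias, hlevel⟩ :=
    exists_level_with_bias_le n hC₁.le (half_pos hε) (by linarith : ε / 2 ≤ 1)
  obtain ⟨M, hM0, hVM, hM⟩ := exists_sample_size hV (by positivity : 0 < ε ^ 2 / 2)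
  have hlevel' : ε * 2 ^ (2 * L) ≤ D * ((L : ℝ) + 1) ^ n := by linarith
  have h2L : (2 : ℝ) ^ L ≤ D * c / ε := by
    rw [le_div_iff₀ hε, ← mul_le_mul_iff_left₀ (by positivity : (0 : ℝ) < 2 ^ L)]
    calc (2 : ℝ) ^ L * ε * 2 ^ L = ε * 2 ^ (2 * L) := by ring
      _ ≤ D * (c * 2 ^ L) := hlevel'.trans (by gcongr; exact hc L)
      _ = D * c * 2 ^ L := by ring
  refine ⟨L, M, hM0, ?_, ?_⟩
  · have := pow_le_pow_left₀ (hb0 L) ((hb L).trans hbias) 2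
    nlinarith
  · refine cost_le_of_level_bounds (Nat.cast_nonneg M) hC₂.le (by positivity) hB.le hε ?_ (hw L)
      hlevel' (succ_le_mul_log_one_div_of_two_pow_le (by nlinarith) hε hε2.le h2L)
    nlinarith

/-- Complexity of the sparse combination technique with standard Monte Carlo:
total cost `O(ε^{−7/2}·(log(1/ε))^{5(d−1)/2})`. -/
theorem sparse_combination_standard_mc_complexity
    (d : ℕ) (hd : 1 ≤ d) (C₁ C₂ V : ℝ) (hC₁ : 0 < C₁) (hC₂ : 0 < C₂) (hV : 0 ≤ V)
    (b w : ℕ → ℝ) (hb0 : ∀ L, 0 ≤ b L) (hw0 : ∀ L, 0 ≤ w L)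
    (hb : ∀ L, b L ≤ C₁ * ((L : ℝ) + 1) ^ (d - 1) * ((2 : ℝ) ^ (2 * L))⁻¹)
    (hw : ∀ L, w L ≤ C₂ * ((L : ℝ) + 1) ^ (d - 1) * (2 : ℝ) ^ (3 * L)) :
    ∃ C : ℝ, 0 < C ∧ ∀ ε : ℝ, 0 < ε → ε < 1 / 2 →
      ∃ (L : ℕ) (M : ℕ), 0 < M ∧
        b L ^ 2 + V / (M : ℝ) ≤ ε ^ 2 ∧
        (M : ℝ) * w L ≤
          C * ε ^ (-(7 : ℝ) / 2) * (Real.log (1 / ε)) ^ ((5 * ((d : ℝ) - 1)) / 2) :=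
  sparse_combination_standard_mc_complexity_general d hd C₁ C₂ V hC₁ hC₂ hV b w hb0 hb hw
end
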